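/- arXiv:1904.10157 — 7 statements merged into one kernel-verified Lean document; each statement's English description precedes it below -/
import Mathlib

section
/- Let N be a positive integer and M ≥ 2N−1 an integer. For vectors x, y ∈ ℂ^N, if |(F_M x)_n| = |(F_M y)_n| for all n = 0,…,M−1, then ‖∇^n x‖₂ = ‖∇^n y‖₂ for every integer n ≥ 0. -/
open scoped BigOperators
open Finset

/-- Discrete Fourier transform of `x ∈ ℂ^N`. -/
noncomputable def dft {N : ℕ} (x : Fin N → ℂ) (n : Fin N) : ℂ :=
  ∑ k : Fin N, x k * Complex.exp (-2 * Real.pi * Complex.I * ((k : ℕ) : ℂ) * ((n : ℕ) : ℂ) / (N : ℂ))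

/-- Inverse discrete Fourier transform. -/
noncomputable def idft {N : ℕ} (u : Fin N → ℂ) (j : Fin N) : ℂ :=
  (1 / (N : ℂ)) * ∑ n : Fin N, u n * Complex.exp (2 * Real.pi * Complex.I * ((j : ℕ) : ℂ) * ((n : ℕ) : ℂ) / (N : ℂ))

/-- `M`-point oversampled discrete Fourier transform of `x ∈ ℂ^N`. -/
noncomputable def odft {N : ℕ} (M : ℕ) (x : Fin N → ℂ) (n : Fin M) : ℂ :=
  ∑ k : Fin N, x k * Complex.exp (-2 * Real.pi * Complex.I * ((k : ℕ) : ℂ) * ((n : ℕ) : ℂ) / (M : ℂ))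

/-- Periodic autocorrelation of `x ∈ ℂ^N`. -/
noncomputable def autp {N : ℕ} (x : Fin N → ℂ) (j : Fin N) : ℂ :=
  ∑ k : Fin N, x (k + j) * (starRingEnd ℂ) (x k)

/-- Extension of `x ∈ ℂ^N` to `ℤ` by zero. -/
noncomputable def extz {N : ℕ} (x : Fin N → ℂ) (i : ℤ) : ℂ :=
  if h : 0 ≤ i ∧ i < (N : ℤ) then x ⟨i.toNat, by omega⟩ else 0

/-- (Regular) autocorrelation of `x ∈ ℂ^N`, as a function on `ℤ`. -/
noncomputable def aut {N : ℕ} (x : Fin N → ℂ) (j : ℤ) : ℂ :=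
  ∑ k : Fin N, extz x (((k : ℕ) : ℤ) + j) * (starRingEnd ℂ) (extz x ((k : ℕ) : ℤ))

/-- Circular convolution on `ℂ^N`. -/
noncomputable def cconv {N : ℕ} (v x : Fin N → ℂ) (j : Fin N) : ℂ :=
  ∑ k : Fin N, v k * x (j - k)

/-- The ℓ² norm on `ℂ^N`. -/
noncomputable def l2 {N : ℕ} (x : Fin N → ℂ) : ℝ :=
  Real.sqrt (∑ k : Fin N, ‖x k‖ ^ 2)

/-- The circular finite-difference operator. -/
noncomputable def nabla {N : ℕ} [NeZero N] (x : Fin N → ℂ) (k : Fin N) : ℂ :=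
  x (k + 1) - x k

/-- The sup norm on `ℂ^N`. -/
noncomputable def linf {N : ℕ} [NeZero N] (x : Fin N → ℂ) : ℝ :=
  Finset.univ.sup' Finset.univ_nonempty (fun k => ‖x k‖)

/-- The sup norm on `ℝ^N`. -/
noncomputable def linfR {N : ℕ} [NeZero N] (x : Fin N → ℝ) : ℝ :=
  Finset.univ.sup' Finset.univ_nonempty (fun k => |x k|)

/-- Cyclic index shift: `k ↦ (k + s) mod N`. -/
def shiftIdx {N : ℕ} [NeZero N] (k : Fin N) (s : ℕ) : Fin N :=
  ⟨((k : ℕ) + s) % N, Nat.mod_lt _ (Nat.pos_of_ne_zero (NeZero.ne N))⟩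

/-- A window of length `W` with constant value `a`, extended by zero. -/
noncomputable def win (W : ℕ) (a : ℂ) (i : ℤ) : ℂ :=
  if 0 ≤ i ∧ i < (W : ℤ) then a else 0

/-!
The squared magnitudes `|F_M x|²` are the `M`-point DFT of the aperiodic autocorrelation of `x`,
whose lags lie in `(-N, N)`; since `M ≥ 2N - 1` these lags do not alias modulo `M`, so the
magnitudes determine the aperiodic autocorrelation, hence the periodic one
`a(j) = aut(j) + aut(j - N)`. The periodic autocorrelation of `∇u` is `2a(j) - a(j+1) - a(j-1)`,
so by induction it is determined for every `∇ⁿx`, and `‖u‖₂² = a(0)`.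
-/

open Complex

noncomputable def dftKernel (M : ℕ) (t : ℤ) (n : ℕ) : ℂ :=
  exp (2 * Real.pi * I * (t : ℂ) * (n : ℂ) / (M : ℂ))

lemma dftKernel_mul_dftKernel (M : ℕ) (s t : ℤ) (n : ℕ) :
    dftKernel M s n * dftKernel M t n = dftKernel M (s + t) n := by
  rw [dftKernel, dftKernel, dftKernel, ← exp_add]
  push_cast
  ring_nf

lemma conj_dftKernel (M : ℕ) (t : ℤ) (n : ℕ) :
    (starRingEnd ℂ) (dftKernel M t n) = dftKernel M (-t) n := by
  rw [dftKernel, dftKernel, ← exp_conj]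
  simp only [map_div₀, map_mul, map_ofNat, conj_ofReal, conj_I, map_intCast, map_natCast]
  push_cast
  ring_nf

lemma sum_dftKernel_eq_ite (M : ℕ) [NeZero M] (t : ℤ) :
    ∑ n : Fin M, dftKernel M t n = if (M : ℤ) ∣ t then (M : ℂ) else 0 := by
  set ζ := exp (2 * Real.pi * I / (M : ℂ))
  have hζ : IsPrimitiveRoot ζ M := isPrimitiveRoot_exp M (NeZero.ne M)
  have hterm : ∀ n : ℕ, dftKernel M t n = (ζ ^ t) ^ n := by
    intro n
    rw [dftKernel, ← zpow_natCast, ← zpow_mul, ← exp_int_mul]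
    push_cast
    ring_nf
  simp only [hterm, Fin.sum_univ_eq_sum_range (fun n => (ζ ^ t) ^ n)]
  split_ifs with hdvd
  · simp [(hζ.zpow_eq_one_iff_dvd t).mpr hdvd]
  · have hne : ζ ^ t ≠ 1 := mt (hζ.zpow_eq_one_iff_dvd t).mp hdvd
    have hpow : (ζ ^ t) ^ M = 1 := by
      rw [← zpow_natCast, ← zpow_mul, mul_comm, zpow_mul, zpow_natCast, hζ.pow_eq_one,
        one_zpow]
    rw [geom_sum_eq hne, hpow, sub_self, zero_div]

lemma odft_eq_sum_dftKernel {N : ℕ} (M : ℕ) (x : Fin N → ℂ) (n : Fin M) :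
    odft M x n = ∑ k : Fin N, x k * dftKernel M (-((k : ℕ) : ℤ)) n := by
  refine Finset.sum_congr rfl fun k _ => ?_
  rw [dftKernel]
  push_cast
  ring_nf

lemma extz_val {N : ℕ} (x : Fin N → ℂ) (k : Fin N) : extz x ((k : ℕ) : ℤ) = x k := by
  simp [extz]

lemma extz_eq_sum_ite {N : ℕ} (x : Fin N → ℂ) (i : ℤ) :
    extz x i = ∑ k : Fin N, if ((k : ℕ) : ℤ) = i then x k else 0 := by
  unfold extz
  split_ifs with hi
  · rw [Finset.sum_eq_single ⟨i.toNat, by omega⟩]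
    · simp [hi.1]
    · intro k _ hk
      rw [if_neg]
      exact fun hki => hk (Fin.ext (by simp only; omega))
    · simp
  · refine (Finset.sum_eq_zero fun k _ => if_neg ?_).symm
    have := k.isLt
    omega

lemma aut_eq_sum_sum {N : ℕ} (x : Fin N → ℂ) (d : ℤ) :
    aut x d = ∑ k : Fin N, ∑ l : Fin N,
      if ((k : ℕ) : ℤ) - ((l : ℕ) : ℤ) = d then x k * (starRingEnd ℂ) (x l) else 0 := by
  rw [aut, Finset.sum_comm]
  refine Finset.sum_congr rfl fun l _ => ?_
  rw [extz_val, extz_eq_sum_ite, Finset.sum_mul]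
  refine Finset.sum_congr rfl fun k _ => ?_
  split_ifs <;> first | (exfalso; omega) | simp

lemma apply_add_eq_extz_add_extz {N : ℕ} [NeZero N] (x : Fin N → ℂ) (l j : Fin N) :
    x (l + j) = extz x ((l : ℕ) + (j : ℕ) : ℤ) + extz x ((l : ℕ) + (j : ℕ) - N : ℤ) := by
  have hl := l.isLt
  have hj := j.isLt
  rw [extz, extz]
  by_cases hlt : (l : ℕ) + j < N
  · rw [dif_pos (by omega), dif_neg (by omega), add_zero]
    congr 1
    ext
    simp only [Fin.val_add, Nat.mod_eq_of_lt hlt]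
    omega
  · rw [dif_neg (by omega), dif_pos (by omega), zero_add]
    congr 1
    ext
    simp only [Fin.val_add, Nat.mod_eq_sub_mod (not_lt.mp hlt),
      Nat.mod_eq_of_lt (by omega : (l : ℕ) + j - N < N)]
    omega

lemma autp_eq_aut_add_aut {N : ℕ} [NeZero N] (x : Fin N → ℂ) (j : Fin N) :
    autp x j = aut x (j : ℕ) + aut x ((j : ℕ) - N : ℤ) := by
  simp only [autp, aut, extz_val, apply_add_eq_extz_add_extz, add_mul, Finset.sum_add_distrib,
    add_sub_assoc]

lemma sq_norm_odft {N : ℕ} (M : ℕ) (x : Fin N → ℂ) (n : Fin M) :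
    (‖odft M x n‖ : ℂ) ^ 2 = ∑ k : Fin N, ∑ l : Fin N,
      x k * (starRingEnd ℂ) (x l) * dftKernel M (((l : ℕ) : ℤ) - ((k : ℕ) : ℤ)) n := by
  rw [← mul_conj', odft_eq_sum_dftKernel, map_sum, Finset.sum_mul_sum]
  refine Finset.sum_congr rfl fun k _ => Finset.sum_congr rfl fun l _ => ?_
  rw [map_mul, conj_dftKernel, mul_mul_mul_comm, dftKernel_mul_dftKernel, neg_neg, neg_add_eq_sub]

lemma sum_sq_norm_odft_mul_dftKernel {N M : ℕ} (hM : 2 * N - 1 ≤ M) (x : Fin N → ℂ) (d : ℤ)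
    (hd : |d| < N) :
    ∑ n : Fin M, (‖odft M x n‖ : ℂ) ^ 2 * dftKernel M d n = M * aut x d := by
  have : NeZero M := ⟨by have := abs_nonneg d; omega⟩
  simp only [sq_norm_odft, Finset.sum_mul, aut_eq_sum_sum, Finset.mul_sum, mul_assoc,
    dftKernel_mul_dftKernel]
  rw [Finset.sum_comm]
  refine Finset.sum_congr rfl fun k _ => ?_
  rw [Finset.sum_comm]
  refine Finset.sum_congr rfl fun l _ => ?_
  rw [← Finset.mul_sum, ← Finset.mul_sum, sum_dftKernel_eq_ite]
  -- no aliasing: `|l - k + d| ≤ 2N - 2 < M`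
  have hdvd :
      (M : ℤ) ∣ ((l : ℕ) : ℤ) - ((k : ℕ) : ℤ) + d ↔ ((k : ℕ) : ℤ) - ((l : ℕ) : ℤ) = d := by
    have := k.isLt
    have := l.isLt
    constructor
    · intro h
      have := Int.eq_zero_of_abs_lt_dvd h (by rw [abs_lt] at hd ⊢; omega)
      omega
    · intro h
      exact ⟨0, by omega⟩
  by_cases hkl : ((k : ℕ) : ℤ) - ((l : ℕ) : ℤ) = d
  · rw [if_pos (hdvd.mpr hkl), if_pos hkl]
    ring
  · rw [if_neg (mt hdvd.mp hkl), if_neg hkl]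
    simp

lemma aut_eq_zero_of_le_abs {N : ℕ} (x : Fin N → ℂ) {d : ℤ} (hd : N ≤ |d|) :
    aut x d = 0 := by
  rw [aut_eq_sum_sum]
  refine Finset.sum_eq_zero fun k _ => Finset.sum_eq_zero fun l _ => if_neg ?_
  have := k.isLt
  have := l.isLt
  rw [le_abs'] at hd
  omega

lemma aut_eq_of_norm_odft_eq {N M : ℕ} (hM : 2 * N - 1 ≤ M) {x y : Fin N → ℂ}
    (h : ∀ n : Fin M, ‖odft M x n‖ = ‖odft M y n‖) : aut x = aut y := by
  funext d
  rcases lt_or_ge |d| N with hd | hd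
  · have hM0 : (M : ℂ) ≠ 0 := Nat.cast_ne_zero.mpr (by have := abs_nonneg d; omega)
    apply mul_left_cancel₀ hM0
    rw [← sum_sq_norm_odft_mul_dftKernel hM x d hd, ← sum_sq_norm_odft_mul_dftKernel hM y d hd]
    simp only [h]
  · rw [aut_eq_zero_of_le_abs x hd, aut_eq_zero_of_le_abs y hd]

lemma sum_mul_conj_add_eq_autp {N : ℕ} [NeZero N] (u : Fin N → ℂ) (a b : Fin N) :
    ∑ k : Fin N, u (k + a) * (starRingEnd ℂ) (u (k + b)) = autp u (a - b) :=
  Fintype.sum_equiv (Equiv.addRight b) _ _ fun k => by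
    simp only [Equiv.coe_addRight]
    congr 2
    abel

lemma autp_nabla {N : ℕ} [NeZero N] (u : Fin N → ℂ) (j : Fin N) :
    autp (nabla u) j = 2 * autp u j - autp u (j + 1) - autp u (j - 1) := by
  have e₁ := sum_mul_conj_add_eq_autp u (j + 1) 1
  have e₂ := sum_mul_conj_add_eq_autp u j 1
  have e₃ := sum_mul_conj_add_eq_autp u (j + 1) 0
  have e₄ := sum_mul_conj_add_eq_autp u j 0
  simp only [add_zero, sub_zero, add_sub_cancel_right, ← add_assoc] at e₁ e₂ e₃ e₄
  conv_lhs => simp only [autp, nabla, map_sub, sub_mul, mul_sub, Finset.sum_sub_distrib]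
  rw [e₁, e₂, e₃, e₄]
  ring

lemma autp_iterate_nabla_eq {N : ℕ} [NeZero N] {x y : Fin N → ℂ} (h : autp x = autp y)
    (n : ℕ) :
    autp (nabla^[n] x) = autp (nabla^[n] y) := by
  induction n with
  | zero => exact h
  | succ n ih =>
    funext j
    rw [Function.iterate_succ_apply', Function.iterate_succ_apply', autp_nabla, autp_nabla, ih]

lemma autp_zero {N : ℕ} [NeZero N] (x : Fin N → ℂ) :
    autp x 0 = ((∑ k : Fin N, ‖x k‖ ^ 2 : ℝ) : ℂ) := by
  simp [autp, mul_conj']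

lemma l2_eq_of_autp_eq {N : ℕ} [NeZero N] {x y : Fin N → ℂ} (h : autp x = autp y) :
    l2 x = l2 y := by
  have hsq : ((∑ k : Fin N, ‖x k‖ ^ 2 : ℝ) : ℂ) = ((∑ k : Fin N, ‖y k‖ ^ 2 : ℝ) : ℂ) := by
    rw [← autp_zero, ← autp_zero, h]
  rw [l2, l2, ofReal_inj.mp hsq]

/-- for `M ≥ 2N−1`, equal oversampled Fourier magnitudes imply
equal ℓ² norms of all iterated circular finite differences. -/
theorem same_derivative_norm_oversampling {N M : ℕ} [NeZero N]
    (hM : 2 * N - 1 ≤ M) (x y : Fin N → ℂ)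
    (h : ∀ n : Fin M, ‖odft M x n‖ = ‖odft M y n‖) :
    ∀ n : ℕ, l2 (nabla^[n] x) = l2 (nabla^[n] y) := by
  have hautp : autp x = autp y := funext fun j => by
    rw [autp_eq_aut_add_aut, autp_eq_aut_add_aut, aut_eq_of_norm_odft_eq hM h]
  exact fun n => l2_eq_of_autp_eq (autp_iterate_nabla_eq hautp n)
end

section
/- Let N be a positive integer, let E ⊆ ℂ be a set of complex numbers, and suppose there is a constant c > 0 such that |z| = c for all z ∈ E. Let x ∈ ℂ^N with x_k ∈ E for all k, and let y ∈ ℂ^N with y_k ∈ conv(E) for all k, where conv(E) denotes the convex hull of E in ℂ ≅ ℝ². If |(F x)_n| = |(F y)_n| for all n = 0,…,N−1, then y_k ∈ E for all k. -/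
open scoped BigOperators
open Finset

/-!
Parseval's identity turns equal Fourier magnitudes into equal energies
`∑ ‖y k‖² = ∑ ‖x k‖² = N c²`. Since `conv E` lies in the closed disc of radius `c`, every
`‖y k‖ ≤ c`, so equality of the energies forces `‖y k‖ = c`. A point of the circle is an extreme
point of the disc (`ℂ` is strictly convex), hence an extreme point of `conv E`, and the extreme
points of a convex hull lie in the set itself.
-/

open Complex Metric ComplexConjugate

local notation "ω[" N "]" => Complex.exp (2 * Real.pi * Complex.I / (N : ℂ))

theorem IsPrimitiveRoot.sum_range_zpow_pow_eq_ite {K : Type*} [Field K] {ζ : K} {N : ℕ}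
    (hζ : IsPrimitiveRoot ζ N) (m : ℤ) :
    ∑ n ∈ range N, (ζ ^ m) ^ n = if (N : ℤ) ∣ m then (N : K) else 0 := by
  split_ifs with hm
  · simp [(hζ.zpow_eq_one_iff_dvd m).2 hm]
  · rw [geom_sum_eq (mt (hζ.zpow_eq_one_iff_dvd m).1 hm), ← zpow_natCast, ← zpow_mul, mul_comm,
      zpow_mul, hζ.zpow_eq_one, one_zpow, sub_self, zero_div]

theorem Fin.natCast_dvd_val_sub_val_iff {N : ℕ} (k l : Fin N) :
    (N : ℤ) ∣ (l : ℤ) - k ↔ k = l := by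
  rw [← Nat.modEq_iff_dvd, Fin.ext_iff]
  exact ⟨fun h => h.eq_of_lt_of_lt k.isLt l.isLt, fun h => h ▸ Nat.ModEq.refl _⟩

theorem exp_neg_two_pi_I_div_eq_zpow {N : ℕ} (k n : ℕ) :
    exp (-2 * Real.pi * I * (k : ℂ) * (n : ℂ) / (N : ℂ)) = ω[N] ^ (-((k : ℤ) * n)) := by
  rw [← exp_int_mul]
  push_cast
  ring_nf

theorem conj_exp_two_pi_I_div (N : ℕ) : conj (ω[N]) = (ω[N])⁻¹ := by
  rw [← exp_conj, ← exp_neg]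
  simp [map_div₀, conj_ofReal, map_ofNat, neg_div]

theorem dft_mul_conj {N : ℕ} (x : Fin N → ℂ) (n : Fin N) :
    dft x n * conj (dft x n) = ∑ k, ∑ l, x k * conj (x l) * (ω[N] ^ ((l : ℤ) - k)) ^ (n : ℕ) := by
  simp only [dft, exp_neg_two_pi_I_div_eq_zpow, map_sum, map_mul, map_zpow₀, conj_exp_two_pi_I_div,
    sum_mul_sum]
  refine sum_congr rfl fun k _ => sum_congr rfl fun l _ => ?_
  have hω : ω[N] ≠ 0 := exp_ne_zero _
  rw [← zpow_natCast, ← zpow_mul, inv_zpow', mul_mul_mul_comm, ← zpow_add₀ hω]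
  congr 2
  ring

theorem sum_exp_two_pi_I_div_zpow_sub_pow_eq_ite {N : ℕ} (k l : Fin N) :
    ∑ n : Fin N, (ω[N] ^ ((l : ℤ) - k)) ^ (n : ℕ) = if k = l then (N : ℂ) else 0 := by
  rw [Fin.sum_univ_eq_sum_range (fun n => (ω[N] ^ ((l : ℤ) - k)) ^ n),
    (isPrimitiveRoot_exp N k.pos.ne').sum_range_zpow_pow_eq_ite]
  exact if_congr (Fin.natCast_dvd_val_sub_val_iff k l) rfl rfl

theorem dft_parseval {N : ℕ} (x : Fin N → ℂ) :
    ∑ n, ‖dft x n‖ ^ 2 = N * ∑ k, ‖x k‖ ^ 2 := by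
  apply ofReal_injective
  simp only [ofReal_sum, ofReal_mul, ofReal_natCast, ofReal_pow, ← mul_conj', dft_mul_conj]
  calc ∑ n : Fin N, ∑ k, ∑ l, x k * conj (x l) * (ω[N] ^ ((l : ℤ) - k)) ^ (n : ℕ)
      = ∑ k, ∑ l, x k * conj (x l) *
          ∑ n : Fin N, (ω[N] ^ ((l : ℤ) - k)) ^ (n : ℕ) := by
        simp only [mul_sum]
        rw [sum_comm]
        exact sum_congr rfl fun k _ => sum_comm
    _ = N * ∑ k, x k * conj (x k) := by
        simp only [sum_exp_two_pi_I_div_zpow_sub_pow_eq_ite, mul_ite, mul_zero, sum_ite_eq, mem_univ,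
          if_true, mul_sum]
        exact sum_congr rfl fun k _ => mul_comm _ _

theorem sum_norm_sq_eq_of_norm_dft_eq {N : ℕ} {x y : Fin N → ℂ}
    (h : ∀ n, ‖dft x n‖ = ‖dft y n‖) : ∑ k, ‖x k‖ ^ 2 = ∑ k, ‖y k‖ ^ 2 := by
  rcases eq_or_ne N 0 with rfl | hN
  · simp
  have hparseval := dft_parseval x
  rw [sum_congr rfl fun n _ => by rw [h n], dft_parseval y] at hparseval
  exact (mul_left_cancel₀ (Nat.cast_ne_zero.2 hN) hparseval).symm

theorem mem_of_mem_convexHull_of_mem_sphere {V : Type*} [NormedAddCommGroup V] [NormedSpace ℝ V]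
    [StrictConvexSpace ℝ V] [Nontrivial V] {E : Set V} {a : V} {r : ℝ}
    (hE : E ⊆ closedBall a r) {z : V} (hz : z ∈ convexHull ℝ E) (hzr : z ∈ sphere a r) :
    z ∈ E := by
  rw [← StrictConvexSpace.extremePoints_closedBall_eq_sphere] at hzr
  exact extremePoints_convexHull_subset
    (inter_extremePoints_subset_extremePoints_of_subset
      (convexHull_min hE (convex_closedBall a r)) ⟨hz, hzr⟩)

theorem convex_hull_to_extreme_general {N : ℕ} (E : Set ℂ) (c : ℝ)
    (hE : ∀ z ∈ E, ‖z‖ = c)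
    (x y : Fin N → ℂ) (hx : ∀ k, x k ∈ E) (hy : ∀ k, y k ∈ convexHull ℝ E)
    (h : ∀ n : Fin N, ‖dft x n‖ = ‖dft y n‖) :
    ∀ k, y k ∈ E := by
  have hE_ball : E ⊆ closedBall 0 c := fun z hz => mem_closedBall_zero_iff.2 (hE z hz).le
  have hy_le : ∀ k, ‖y k‖ ≤ c := fun k =>
    mem_closedBall_zero_iff.1 (convexHull_min hE_ball (convex_closedBall 0 c) (hy k))
  have hy_energy : ∑ k, ‖y k‖ ^ 2 = ∑ _k : Fin N, c ^ 2 := by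
    rw [← sum_norm_sq_eq_of_norm_dft_eq h]
    exact sum_congr rfl fun k _ => by rw [hE _ (hx k)]
  intro k
  have hyk : ‖y k‖ ^ 2 = c ^ 2 := (sum_eq_sum_iff_of_le fun i _ =>
    pow_le_pow_left₀ (norm_nonneg _) (hy_le i) 2).1 hy_energy k (mem_univ k)
  refine mem_of_mem_convexHull_of_mem_sphere hE_ball (hy k) (mem_sphere_zero_iff_norm.2 ?_)
  exact (sq_eq_sq₀ (norm_nonneg _) ((norm_nonneg _).trans (hy_le k))).1 hyk

/-- relaxing an equimodular constraint set to its convex hull. -/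
theorem convex_hull_to_extreme {N : ℕ} [NeZero N] (E : Set ℂ) (c : ℝ)
    (hc : 0 < c) (hE : ∀ z ∈ E, ‖z‖ = c)
    (x y : Fin N → ℂ) (hx : ∀ k, x k ∈ E) (hy : ∀ k, y k ∈ convexHull ℝ E)
    (h : ∀ n : Fin N, ‖dft x n‖ = ‖dft y n‖) :
    ∀ k, y k ∈ E :=
  convex_hull_to_extreme_general E c hE x y hx hy h
end

section
/- Let N be a positive integer and let x, y ∈ {0,1}^N be binary vectors with |(F x)_n| = |(F y)_n| for all n = 0,…,N−1. If the number of nonzero entries ‖x‖₀ belongs to {0, 1, 2, 3, N−3, N−2, N−1, N}, then x and y are equal up to trivial ambiguities: there exists an integer k₀ such that either y_k = x_{(k+k₀) mod N} for all k, or y_k = x_{(k₀ − k) mod N} for all k. -/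
/-!
Wiener–Khinchin: the moduli `|F x|` determine the periodic autocorrelation of `x`. For a binary
`x` with support `S`, the autocorrelation at lag `j` counts the pairs `s, t ∈ S` with `t - s = j`,
so `S` and the support `T` of `y` have the same multiset of differences; this passes to
complements, which reduces dense supports to sparse ones. If `|S| ≤ 2`, a common difference lets
one translate `T` onto `S`. If `|S| = 3`, translate so that `S = {c, a, b}` and `T = {r, a, b}`;
the differences between the third point and the common ones form the multisets `{±(c - a), ±(c - b)}` and
`{±(r - a), ±(r - b)}`, and their equality forces `r` to be the image of `c` under a translation
or reflection that maps `{a, b}` onto itself.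
-/

open scoped BigOperators
open Finset

open Complex
open scoped Pointwise

section Fourier

variable {N : ℕ} [NeZero N]

noncomputable def expChar (N : ℕ) [NeZero N] : AddChar (Fin N) ℂ where
  toFun a := exp (2 * Real.pi * I / N) ^ (a : ℕ)
  map_zero_eq_one' := by simp
  map_add_eq_mul' a b := by
    rw [Fin.val_add, ← pow_eq_pow_mod _ (isPrimitiveRoot_exp N (NeZero.ne N)).pow_eq_one,
      pow_add]

lemma expChar_apply (a : Fin N) : expChar N a = exp (2 * Real.pi * I / N) ^ (a : ℕ) := rfl

lemma expChar_mul (k n : Fin N) :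
    expChar N (k * n) = exp (2 * Real.pi * I * (k : ℕ) * (n : ℕ) / N) := by
  rw [expChar_apply, Fin.val_mul,
    ← pow_eq_pow_mod _ (isPrimitiveRoot_exp N (NeZero.ne N)).pow_eq_one, ← exp_nat_mul]
  push_cast
  ring_nf

lemma dft_eq_sum_expChar (x : Fin N → ℂ) (n : Fin N) :
    dft x n = ∑ k, x k * expChar N (-(k * n)) := by
  refine Finset.sum_congr rfl fun k _ => ?_
  rw [AddChar.map_neg_eq_inv, expChar_mul, ← exp_neg]
  ring_nf

open Fin.CommRing in
lemma sum_expChar_mul (m : Fin N) : ∑ n, expChar N (m * n) = if m = 0 then (N : ℂ) else 0 := by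
  have htrivial : (expChar N).mulShift m = 0 ↔ m = 0 := by
    refine ⟨fun hm => ?_, fun hm => by ext n; simp [hm]⟩
    have h1 : expChar N m = 1 := by simpa using DFunLike.congr_fun hm 1
    rw [expChar_apply, (isPrimitiveRoot_exp N (NeZero.ne N)).pow_eq_one_iff_dvd] at h1
    exact Fin.ext (Nat.eq_zero_of_dvd_of_lt h1 m.isLt)
  simpa [htrivial] using AddChar.sum_eq_ite ((expChar N).mulShift m)

open Fin.CommRing in
theorem sum_sq_norm_dft_mul_expChar (x : Fin N → ℂ) (j : Fin N) :
    ∑ n, (‖dft x n‖ ^ 2 : ℂ) * expChar N (j * n) = N * autp x j := by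
  have hconj :
      ∀ n, (starRingEnd ℂ) (dft x n) = ∑ l, (starRingEnd ℂ) (x l) * expChar N (l * n) :=
    fun n => by simp [dft_eq_sum_expChar, AddChar.map_neg_eq_conj]
  calc ∑ n, (‖dft x n‖ ^ 2 : ℂ) * expChar N (j * n)
      = ∑ n, ∑ k, ∑ l, x k * (starRingEnd ℂ) (x l) * expChar N ((l + j - k) * n) := by
        refine Finset.sum_congr rfl fun n _ => ?_
        rw [← mul_conj', hconj, dft_eq_sum_expChar, Finset.sum_mul_sum, Finset.sum_mul]
        refine Finset.sum_congr rfl fun k _ => ?_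
        rw [Finset.sum_mul]
        refine Finset.sum_congr rfl fun l _ => ?_
        rw [show (l + j - k) * n = -(k * n) + l * n + j * n by ring, AddChar.map_add_eq_mul,
          AddChar.map_add_eq_mul]
        ring
    _ = ∑ k, ∑ l, x k * (starRingEnd ℂ) (x l) * ∑ n, expChar N ((l + j - k) * n) := by
        rw [Finset.sum_comm]
        refine Finset.sum_congr rfl fun k _ => ?_
        rw [Finset.sum_comm]
        simp only [Finset.mul_sum]
    _ = N * autp x j := by
        simp only [sum_expChar_mul, sub_eq_zero, mul_ite, mul_zero]
        rw [Finset.sum_comm, autp, Finset.mul_sum]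
        refine Finset.sum_congr rfl fun l _ => ?_
        rw [Finset.sum_ite_eq]
        simp only [Finset.mem_univ, if_true]
        ring

theorem autp_eq_of_norm_dft_eq {x y : Fin N → ℂ} (h : ∀ n, ‖dft x n‖ = ‖dft y n‖) :
    autp x = autp y := by
  funext j
  have hN : (N : ℂ) ≠ 0 := Nat.cast_ne_zero.mpr (NeZero.ne N)
  apply mul_left_cancel₀ hN
  simp only [← sum_sq_norm_dft_mul_expChar, h]

end Fourier

section Finset

variable {α : Type*} [DecidableEq α]

lemma exists_eq_insert_pair_of_card_eq_three {S : Finset α} {a b : α} (hS : #S = 3)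
    (hab : a ≠ b) (ha : a ∈ S) (hb : b ∈ S) :
    ∃ c ∉ ({a, b} : Finset α), S = insert c {a, b} := by
  have hsub : {a, b} ⊆ S := insert_subset_iff.mpr ⟨ha, singleton_subset_iff.mpr hb⟩
  obtain ⟨c, hc⟩ := card_eq_one.mp (by rw [card_sdiff_of_subset hsub, hS, card_pair hab])
  refine ⟨c, (mem_sdiff.mp (hc ▸ mem_singleton_self c)).2, ?_⟩
  rw [← sdiff_union_of_subset hsub, hc, ← insert_eq]

end Finset

section DiffMultiset

variable {G : Type*} [AddCommGroup G]

def negPair (u : G) : Multiset G := {u, -u}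

lemma mem_negPair {u v : G} : v ∈ negPair u ↔ v = u ∨ v = -u := by
  simp [negPair]

lemma negPair_eq_negPair_iff {u v : G} : negPair u = negPair v ↔ u = v ∨ u = -v := by
  refine ⟨fun h => mem_negPair.mp (h ▸ mem_negPair.mpr (Or.inl rfl)), ?_⟩
  rintro (rfl | rfl)
  · rfl
  · rw [negPair, negPair, neg_neg]
    exact Multiset.pair_comm _ _

lemma negPair_add_negPair_inj {u v u' v' : G}
    (h : negPair u + negPair v = negPair u' + negPair v') :
    (negPair u = negPair u' ∧ negPair v = negPair v') ∨
      (negPair u = negPair v' ∧ negPair v = negPair u') := by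
  have hu : u ∈ negPair u' + negPair v' :=
    h ▸ Multiset.mem_add.mpr (Or.inl (mem_negPair.mpr (Or.inl rfl)))
  rcases Multiset.mem_add.mp hu with hu' | hv'
  · have e := negPair_eq_negPair_iff.mpr (mem_negPair.mp hu')
    rw [e, add_right_inj] at h
    exact Or.inl ⟨e, h⟩
  · have e := negPair_eq_negPair_iff.mpr (mem_negPair.mp hv')
    rw [e, add_comm (negPair u'), add_right_inj] at h
    exact Or.inr ⟨e, h⟩

def diffMultiset (S : Finset G) : Multiset G := S.val.bind fun s => S.val.map (· - s)

lemma exists_add_mem_add_mem_of_diffMultiset_eq {S T : Finset G}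
    (h : diffMultiset S = diffMultiset T) {p q : G} (hp : p ∈ T) (hq : q ∈ T) :
    ∃ g, g + p ∈ S ∧ g + q ∈ S := by
  have hqp : q - p ∈ diffMultiset S :=
    h ▸ Multiset.mem_bind.mpr ⟨p, hp, Multiset.mem_map_of_mem _ hq⟩
  obtain ⟨s, hs, t, ht, hts⟩ : ∃ s ∈ S, ∃ t ∈ S, t - s = q - p := by
    simpa [diffMultiset] using hqp
  have hq' : s - p + q = t := by linear_combination (norm := module) -hts
  exact ⟨s - p, by rwa [sub_add_cancel], by rwa [hq']⟩

variable [DecidableEq G]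

lemma count_diffMultiset (S : Finset G) (j : G) :
    (diffMultiset S).count j = #(S ∩ (-j +ᵥ S)) := by
  have hcount : ∀ s, (S.val.map (· - s)).count j = if s ∈ -j +ᵥ S then 1 else 0 := by
    intro s
    have h := Multiset.count_map_eq_count' (· - s) S.val sub_left_injective (j + s)
    rw [add_sub_cancel_right] at h
    simp only [h, Multiset.count_eq_of_nodup S.nodup, mem_neg_vadd_finset_iff, vadd_eq_add]
    rfl
  rw [diffMultiset, Multiset.count_bind, ← Finset.sum_eq_multiset_sum]
  simp only [hcount, sum_ite_mem, card_eq_sum_ones]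

lemma count_zero_diffMultiset (S : Finset G) : (diffMultiset S).count 0 = #S := by
  simp [count_diffMultiset]

lemma card_eq_of_diffMultiset_eq {S T : Finset G} (h : diffMultiset S = diffMultiset T) :
    #S = #T := by
  rw [← count_zero_diffMultiset, h, count_zero_diffMultiset]

lemma diffMultiset_vadd (g : G) (S : Finset G) : diffMultiset (g +ᵥ S) = diffMultiset S := by
  ext j
  rw [count_diffMultiset, count_diffMultiset, vadd_comm, ← vadd_finset_inter, card_vadd_finset]

lemma count_diffMultiset_compl [Fintype G] (S : Finset G) (j : G) :
    (diffMultiset Sᶜ).count j + 2 * #S = Fintype.card G + (diffMultiset S).count j := by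
  have hcompl : -j +ᵥ Sᶜ = (-j +ᵥ S)ᶜ := coe_injective (by simp [Set.vadd_set_compl])
  rw [count_diffMultiset, count_diffMultiset, hcompl, ← compl_union, card_compl]
  have hunion := card_union_add_card_inter S (-j +ᵥ S)
  have hle := card_le_univ (S ∪ (-j +ᵥ S))
  rw [card_vadd_finset] at hunion
  omega

lemma diffMultiset_compl_eq [Fintype G] {S T : Finset G} (h : diffMultiset S = diffMultiset T) :
    diffMultiset Sᶜ = diffMultiset Tᶜ := by
  have hcard := card_eq_of_diffMultiset_eq h
  ext j
  have hS := count_diffMultiset_compl S j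
  have hT := count_diffMultiset_compl T j
  rw [h, hcard] at hS
  omega

lemma diffMultiset_insert {c : G} {U : Finset G} (hc : c ∉ U) :
    diffMultiset (insert c U) = 0 ::ₘ (U.val.bind fun s => negPair (c - s)) + diffMultiset U := by
  simp only [diffMultiset, insert_val_of_notMem hc, Multiset.cons_bind, Multiset.map_cons,
    sub_self, Multiset.bind_cons, negPair, neg_sub]
  simp only [Multiset.insert_eq_cons, ← Multiset.singleton_add, Multiset.bind_add,
    Multiset.bind_singleton]
  abel

def IsShiftOrReflection (S T : Finset G) : Prop := ∃ g : G, T = g +ᵥ S ∨ T = g +ᵥ -S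

lemma IsShiftOrReflection.vadd {S T : Finset G} (h : IsShiftOrReflection S T) (g : G) :
    IsShiftOrReflection S (g +ᵥ T) := by
  obtain ⟨g', rfl | rfl⟩ := h
  · exact ⟨g + g', Or.inl (vadd_vadd g g' S)⟩
  · exact ⟨g + g', Or.inr (vadd_vadd g g' (-S))⟩

lemma IsShiftOrReflection.compl [Fintype G] {S T : Finset G} (h : IsShiftOrReflection S T) :
    IsShiftOrReflection Sᶜ Tᶜ := by
  obtain ⟨g, rfl | rfl⟩ := h
  · exact ⟨g, Or.inl (coe_injective (by simp [Set.vadd_set_compl]))⟩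
  · exact ⟨g, Or.inr (coe_injective (by simp [Set.vadd_set_compl]))⟩

lemma negPair_add_negPair_eq_of_diffMultiset_insert_eq {a b c r : G} (hab : a ≠ b)
    (hc : c ∉ ({a, b} : Finset G)) (hr : r ∉ ({a, b} : Finset G))
    (h : diffMultiset (insert c {a, b}) = diffMultiset (insert r {a, b})) :
    negPair (c - a) + negPair (c - b) = negPair (r - a) + negPair (r - b) := by
  have hval : ({a, b} : Finset G).val = a ::ₘ {b} :=
    insert_val_of_notMem (by simpa using hab)
  rw [diffMultiset_insert hc, diffMultiset_insert hr, add_left_inj, Multiset.cons_inj_right] at h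
  simpa [hval] using h

lemma isShiftOrReflection_insert_of_diffMultiset_eq {a b c r : G} (hab : a ≠ b)
    (hc : c ∉ ({a, b} : Finset G)) (hr : r ∉ ({a, b} : Finset G))
    (h : diffMultiset (insert c {a, b}) = diffMultiset (insert r {a, b})) :
    IsShiftOrReflection (insert c {a, b}) (insert r {a, b}) := by
  have translate : ∀ g, r = g + c → g + a = a ∧ g + b = b ∨ g + a = b ∧ g + b = a →
      IsShiftOrReflection (insert c {a, b}) (insert r {a, b}) := by
    rintro g rfl (⟨ha, hb⟩ | ⟨ha, hb⟩)
    · exact ⟨g, Or.inl (by simp [vadd_finset_insert, ha, hb])⟩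
    · exact ⟨g, Or.inl (by simp [vadd_finset_insert, ha, hb, pair_comm])⟩
  have reflect : ∀ g, r = g - c → g - a = a ∧ g - b = b ∨ g - a = b ∧ g - b = a →
      IsShiftOrReflection (insert c {a, b}) (insert r {a, b}) := by
    rintro g rfl (⟨ha, hb⟩ | ⟨ha, hb⟩)
    · exact ⟨g, Or.inr (by simp [vadd_finset_insert, ← sub_eq_add_neg, ha, hb])⟩
    · exact ⟨g, Or.inr (by simp [vadd_finset_insert, ← sub_eq_add_neg, ha, hb, pair_comm])⟩
  have hpairs := negPair_add_negPair_eq_of_diffMultiset_insert_eq hab hc hr h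
  rcases negPair_add_negPair_inj hpairs with ⟨hra, hrb⟩ | ⟨hrb, hra⟩ <;>
    rw [negPair_eq_negPair_iff] at hra hrb
  · rcases hra with hra | hra
    · exact translate 0 (by simpa using hra.symm) (Or.inl (by simp))
    rcases hrb with hrb | hrb
    · exact translate 0 (by simpa using hrb.symm) (Or.inl (by simp))
    · exact reflect (a + a) (by linear_combination (norm := module) hra)
        (Or.inl ⟨by abel, by linear_combination (norm := module) hrb - hra⟩)
  · rcases hrb with hrb | hrb
    · rcases hra with hra | hra
      · exact translate (a - b) (by linear_combination (norm := module) -hra)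
          (Or.inr ⟨by linear_combination (norm := module) hra - hrb, by abel⟩)
      · exact reflect (a + b) (by linear_combination (norm := module) hra)
          (Or.inr ⟨by abel, by abel⟩)
    · exact reflect (a + b) (by linear_combination (norm := module) hrb)
        (Or.inr ⟨by abel, by abel⟩)

lemma isShiftOrReflection_of_card_le_two {S T : Finset G} (hS : #S ≤ 2)
    (h : diffMultiset S = diffMultiset T) : IsShiftOrReflection S T := by
  have hcard := card_eq_of_diffMultiset_eq h
  obtain hT | ⟨p, q, rfl⟩ : T = ∅ ∨ ∃ p q, T = {p, q} := by
    rcases (show #T = 0 ∨ #T = 1 ∨ #T = 2 by omega) with h0 | h1 | h2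
    · exact Or.inl (card_eq_zero.mp h0)
    · obtain ⟨p, rfl⟩ := card_eq_one.mp h1
      exact Or.inr ⟨p, p, by simp⟩
    · obtain ⟨p, q, -, rfl⟩ := card_eq_two.mp h2
      exact Or.inr ⟨p, q, rfl⟩
  · subst hT
    obtain rfl : S = ∅ := card_eq_zero.mp (by simpa using hcard)
    exact ⟨0, Or.inl (by simp)⟩
  · obtain ⟨g, hp, hq⟩ :=
      exists_add_mem_add_mem_of_diffMultiset_eq h (p := p) (q := q) (by simp) (by simp)
    have hsub : g +ᵥ {p, q} ⊆ S := by simp [vadd_finset_insert, insert_subset_iff, hp, hq]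
    have hST : g +ᵥ {p, q} = S := eq_of_subset_of_card_le hsub (by rw [card_vadd_finset, hcard])
    exact ⟨-g, Or.inl (by rw [← hST, neg_vadd_vadd])⟩

lemma isShiftOrReflection_of_card_eq_three {S T : Finset G} (hS : #S = 3)
    (h : diffMultiset S = diffMultiset T) : IsShiftOrReflection S T := by
  obtain ⟨w, p, q, hwp, hwq, hpq, rfl⟩ :=
    card_eq_three.mp ((card_eq_of_diffMultiset_eq h).symm.trans hS)
  obtain ⟨g, hp, hq⟩ :=
    exists_add_mem_add_mem_of_diffMultiset_eq h (p := p) (q := q) (by simp) (by simp)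
  have hpq' : g + p ≠ g + q := by simpa using hpq
  obtain ⟨c, hc, rfl⟩ := exists_eq_insert_pair_of_card_eq_three hS hpq' hp hq
  have hT : g +ᵥ insert w {p, q} = insert (g + w) ({g + p, g + q} : Finset G) := by
    simp [vadd_finset_insert]
  have hw : g + w ∉ ({g + p, g + q} : Finset G) := by simp [hwp, hwq]
  have key := isShiftOrReflection_insert_of_diffMultiset_eq hpq' hc hw
    (by rw [← hT, diffMultiset_vadd, h])
  rw [← hT] at key
  simpa using key.vadd (-g)

lemma isShiftOrReflection_of_card_le_three {S T : Finset G} (hS : #S ≤ 3)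
    (h : diffMultiset S = diffMultiset T) : IsShiftOrReflection S T := by
  rcases Nat.lt_or_eq_of_le hS with hS | hS
  · exact isShiftOrReflection_of_card_le_two (by omega) h
  · exact isShiftOrReflection_of_card_eq_three hS h

lemma isShiftOrReflection_of_card_compl_le_three [Fintype G] {S T : Finset G} (hS : #Sᶜ ≤ 3)
    (h : diffMultiset S = diffMultiset T) : IsShiftOrReflection S T := by
  simpa using (isShiftOrReflection_of_card_le_three hS (diffMultiset_compl_eq h)).compl

lemma IsShiftOrReflection.exists_mem_iff {S T : Finset G} (h : IsShiftOrReflection S T) :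
    ∃ k₀, (∀ k, k ∈ T ↔ k + k₀ ∈ S) ∨ (∀ k, k ∈ T ↔ k₀ - k ∈ S) := by
  obtain ⟨g, rfl | rfl⟩ := h
  · refine ⟨-g, Or.inl fun k => ?_⟩
    rw [← neg_neg g, mem_neg_vadd_finset_iff, vadd_eq_add, neg_neg, add_comm]
  · refine ⟨g, Or.inr fun k => ?_⟩
    rw [← neg_neg g, mem_neg_vadd_finset_iff, vadd_eq_add, neg_neg, mem_neg', neg_add_eq_sub,
      neg_sub]

end DiffMultiset

section BinarySignals

variable {N : ℕ} [NeZero N]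

lemma autp_indicator_eq_count_diffMultiset (S : Finset (Fin N)) (j : Fin N) :
    autp (fun k => if k ∈ S then (1 : ℂ) else 0) j = (diffMultiset S).count j := by
  have hfilter : ({k | k + j ∈ S ∧ k ∈ S} : Finset (Fin N)) = S ∩ (-j +ᵥ S) := by
    ext k
    simp [mem_neg_vadd_finset_iff, add_comm, and_comm]
  simp only [autp, apply_ite (starRingEnd ℂ), map_one, map_zero, ite_zero_mul_ite_zero, mul_one]
  rw [sum_boole, hfilter, count_diffMultiset]

lemma diffMultiset_eq_of_norm_dft_indicator_eq {S T : Finset (Fin N)}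
    (h : ∀ n, ‖dft (fun k => if k ∈ S then (1 : ℂ) else 0) n‖ =
      ‖dft (fun k => if k ∈ T then (1 : ℂ) else 0) n‖) :
    diffMultiset S = diffMultiset T := by
  ext j
  have hj := congrFun (autp_eq_of_norm_dft_eq h) j
  rwa [autp_indicator_eq_count_diffMultiset, autp_indicator_eq_count_diffMultiset,
    Nat.cast_inj] at hj

end BinarySignals

open scoped Classical in
/-- uniqueness up to trivial ambiguities for very sparse (or very
dense) binary signals. -/
theorem sparse_binary_uniqueness {N : ℕ} [NeZero N] (x y : Fin N → ℝ)
    (hx : ∀ k, x k = 0 ∨ x k = 1) (hy : ∀ k, y k = 0 ∨ y k = 1)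
    (h : ∀ n : Fin N, ‖dft (fun k => (x k : ℂ)) n‖ =
      ‖dft (fun k => (y k : ℂ)) n‖)
    (hcard : (Finset.univ.filter fun k => x k ≠ 0).card ∈
      ({0, 1, 2, 3, N - 3, N - 2, N - 1, N} : Set ℕ)) :
    ∃ k₀ : Fin N, (∀ k, y k = x (k + k₀)) ∨ (∀ k, y k = x (k₀ - k)) := by
  set S := Finset.univ.filter fun k => x k ≠ 0
  set T := Finset.univ.filter fun k => y k ≠ 0
  have hxS : ∀ k, x k = if k ∈ S then 1 else 0 := fun k => by
    rcases hx k with h | h <;> simp [S, h]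
  have hyT : ∀ k, y k = if k ∈ T then 1 else 0 := fun k => by
    rcases hy k with h | h <;> simp [T, h]
  simp only [hxS, hyT, apply_ite ofReal, ofReal_one, ofReal_zero] at h
  have hdiff := diffMultiset_eq_of_norm_dft_indicator_eq h
  have hsparse : #S ≤ 3 ∨ #Sᶜ ≤ 3 := by
    have := card_le_univ S
    simp only [Set.mem_insert_iff, Set.mem_singleton_iff, Fintype.card_fin] at hcard this
    rw [card_compl, Fintype.card_fin]
    omega
  have hST : IsShiftOrReflection S T := hsparse.elim
    (isShiftOrReflection_of_card_le_three · hdiff)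
    (isShiftOrReflection_of_card_compl_le_three · hdiff)
  obtain ⟨k₀, hk | hk⟩ := hST.exists_mem_iff
  · exact ⟨k₀, Or.inl fun k => by simp only [hxS, hyT, hk]⟩
  · exact ⟨k₀, Or.inr fun k => by simp only [hxS, hyT, hk]⟩
end

section
/- Let N be a positive integer and let x ∈ {0,1}^N be a binary vector with x_0 = x_{N−1} = 1 whose Z-transform P_x(z) = ∑_{k=0}^{N−1} x_k z^k is reciprocal, i.e. x_k = x_{N−1−k} for all k (equivalently P_x equals its reverse polynomial z^{N−1} P_x(1/z)). Then any binary vector y ∈ {0,1}^N with Aut(y) = Aut(x) satisfies y = x. -/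
open scoped BigOperators
open Finset

/-!
The autocorrelation at lag `N - 1 - m` is `∑_{i+j=m} x_i x_{N-1-j}`. Its two extreme terms are
`x_m x_{N-1}` and `x_0 x_{N-1-m}`; every other term only involves entries with index `< m` or
`> N - 1 - m`. The largest lag gives `y_0 y_{N-1} = x_0 x_{N-1} = 1`, so `y_0 = y_{N-1} = 1`.
Inductively, once the outer entries agree, lag `N - 1 - m` gives
`y_m + y_{N-1-m} = x_m + x_{N-1-m} = 2 x_m` by reciprocity, and for binary values this forces
`y_m = y_{N-1-m} = x_m`.
-/

section Correlation

variable {R : Type*} [Ring R]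

/-- `corr u n m = ∑_{i+j=m} u_i u_{n-j}` is the coefficient of `z^m` in `P_u(z) · z^n P_u(1/z)`;
for `m ≤ n` and `u` supported on `[0, n]` it is the autocorrelation of `u` at lag `n - m`. -/
def corr (u : ℕ → R) (n m : ℕ) : R :=
  ∑ p ∈ antidiagonal m, u p.1 * u (n - p.2)

lemma corr_zero (u : ℕ → R) (n : ℕ) : corr u n 0 = u 0 * u n := by
  simp [corr]

lemma corr_sub_corr_of_agree {u v : ℕ → R} {n m : ℕ} (hm : 0 < m)
    (h : ∀ i < m, v i = u i ∧ v (n - i) = u (n - i)) :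
    corr v n m - corr u n m = (v m * v n - u m * u n) + (v 0 * v (n - m) - u 0 * u (n - m)) := by
  rw [corr, corr, ← sum_sub_distrib]
  refine sum_eq_add_of_mem (m, 0) (0, m) (by simp) (by simp) (by simp; omega) ?_
  rintro ⟨i, j⟩ hij ⟨him, hjm⟩
  rw [HasAntidiagonal.mem_antidiagonal] at hij
  have hi : i < m := by
    by_contra! hi
    exact him (by ext <;> simp <;> omega)
  have hj : j < m := by
    by_contra! hj
    exact hjm (by ext <;> simp <;> omega)
  simp only [(h i hi).1, (h j hj).2, sub_self]

end Correlation

lemma eq_and_eq_of_add_eq_two_mul {R : Type*} [Ring R] [CharZero R] {a b c : R}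
    (ha : a = 0 ∨ a = 1) (hb : b = 0 ∨ b = 1) (hc : c = 0 ∨ c = 1) (h : a + b = 2 * c) :
    a = c ∧ b = c := by
  rcases ha with rfl | rfl <;> rcases hb with rfl | rfl <;> rcases hc with rfl | rfl <;>
    norm_num at *

lemma eq_of_corr_eq_of_reciprocal {R : Type*} [CommRing R] [CharZero R] {u v : ℕ → R} {n : ℕ}
    (hu : ∀ i ≤ n, u i = 0 ∨ u i = 1) (hv : ∀ i ≤ n, v i = 0 ∨ v i = 1) (hu0 : u 0 = 1)
    (hrec : ∀ i ≤ n, u (n - i) = u i) (h : ∀ m ≤ n, corr v n m = corr u n m) :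
    ∀ i ≤ n, v i = u i := by
  have hun : u n = 1 := by simpa [hu0] using hrec 0 n.zero_le
  suffices key : ∀ m ≤ n, v m = u m ∧ v (n - m) = u (n - m) from fun i hi => (key i hi).1
  intro m
  induction m using Nat.strong_induction_on with
  | _ m ih =>
    intro hm
    rcases Nat.eq_zero_or_pos m with rfl | hm0
    · have hv0n : v 0 * v n = 1 := by simpa [corr_zero, hu0, hun] using h 0 n.zero_le
      have hv0 : v 0 = 1 := by
        rcases hv 0 n.zero_le with h0 | h0
        · simp [h0] at hv0n
        · exact h0
      refine ⟨hv0.trans hu0.symm, ?_⟩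
      simpa [hv0, hun] using hv0n
    · have ih' : ∀ i < m, v i = u i ∧ v (n - i) = u (n - i) := fun i hi => ih i hi (by omega)
      have hv0 : v 0 = 1 := (ih' 0 hm0).1.trans hu0
      have hvn : v n = 1 := by simpa [hun] using (ih' 0 hm0).2
      have hsum : v m + v (n - m) = 2 * u m := by
        have := corr_sub_corr_of_agree hm0 ih'
        rw [h m hm, sub_self, hv0, hvn, hu0, hun, hrec m hm] at this
        linear_combination -this
      rw [hrec m hm]
      exact eq_and_eq_of_add_eq_two_mul (hv m hm) (hv (n - m) (by omega)) (hu m hm) hsum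

section ZeroExtend

variable {R : Type*} [Zero R] {N : ℕ}

def zeroExtend (x : Fin N → R) (i : ℕ) : R :=
  if h : i < N then x ⟨i, h⟩ else 0

lemma zeroExtend_of_lt (x : Fin N → R) {i : ℕ} (hi : i < N) : zeroExtend x i = x ⟨i, hi⟩ :=
  dif_pos hi

lemma zeroExtend_of_le (x : Fin N → R) {i : ℕ} (hi : N ≤ i) : zeroExtend x i = 0 :=
  dif_neg (by omega)

end ZeroExtend

lemma extz_ofReal_natCast {N : ℕ} (x : Fin N → ℝ) (i : ℕ) :
    extz (fun k => (x k : ℂ)) i = zeroExtend x i := by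
  unfold extz zeroExtend
  by_cases hi : i < N
  · rw [dif_pos (by omega), dif_pos hi]
    rfl
  · rw [dif_neg (by omega), dif_neg hi]
    simp

lemma aut_ofReal_eq_corr {N : ℕ} (x : Fin N → ℝ) {m : ℕ} (hm : m < N) :
    aut (fun k => (x k : ℂ)) ((N - 1 - m : ℕ) : ℤ) = corr (zeroExtend x) (N - 1) m := by
  set u := zeroExtend x
  calc aut (fun k => (x k : ℂ)) ((N - 1 - m : ℕ) : ℤ)
      = ((∑ k ∈ range N, u (k + (N - 1 - m)) * u k : ℝ) : ℂ) := by
        rw [aut, ← Fin.sum_univ_eq_sum_range]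
        push_cast
        simp only [← Nat.cast_add, extz_ofReal_natCast, Complex.conj_ofReal, u]
    _ = ((∑ k ∈ range (m + 1), u (k + (N - 1 - m)) * u k : ℝ) : ℂ) := by
        congr 1
        refine (sum_subset (range_subset_range.2 (by omega)) fun k _ hk => ?_).symm
        rw [mem_range, not_lt] at hk
        rw [show u (k + (N - 1 - m)) = 0 from zeroExtend_of_le x (by omega), zero_mul]
    _ = corr u (N - 1) m := by
        rw [corr, Nat.sum_antidiagonal_eq_sum_range_succ (fun i j => u i * u (N - 1 - j))]
        congr 1
        refine sum_congr rfl fun k hk => ?_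
        rw [mem_range] at hk
        rw [mul_comm, show N - 1 - (m - k) = k + (N - 1 - m) by omega]

/-- a binary signal with reciprocal Z-transform is uniquely
determined by its (regular) autocorrelation among binary signals. -/
theorem reciprocal_aut_uniqueness {N : ℕ} [NeZero N] (x y : Fin N → ℝ)
    (hx : ∀ k, x k = 0 ∨ x k = 1)
    (hx0 : x ⟨0, Nat.pos_of_ne_zero (NeZero.ne N)⟩ = 1)
    (hrec : ∀ k : Fin N, x k = x ⟨N - 1 - (k : ℕ), by omega⟩)
    (hy : ∀ k, y k = 0 ∨ y k = 1)
    (haut : ∀ j : ℤ, aut (fun k => (y k : ℂ)) j = aut (fun k => (x k : ℂ)) j) :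
    y = x := by
  have hN : 0 < N := Nat.pos_of_ne_zero (NeZero.ne N)
  have hcorr : ∀ m ≤ N - 1, corr (zeroExtend y) (N - 1) m = corr (zeroExtend x) (N - 1) m :=
    fun m hm => by
      exact_mod_cast (aut_ofReal_eq_corr y (by omega)).symm.trans
        ((haut _).trans (aut_ofReal_eq_corr x (by omega)))
  have hext := eq_of_corr_eq_of_reciprocal
    (fun i hi => by rw [zeroExtend_of_lt x (by omega)]; exact hx _)
    (fun i hi => by rw [zeroExtend_of_lt y (by omega)]; exact hy _)
    (by rw [zeroExtend_of_lt x hN]; exact hx0)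
    (fun i hi => by
      rw [zeroExtend_of_lt x (by omega), zeroExtend_of_lt x (by omega)]
      exact (hrec ⟨i, by omega⟩).symm)
    hcorr
  funext k
  simpa only [zeroExtend_of_lt _ k.isLt] using hext k (by omega)
end

section
/- Let N be a positive integer and M ≥ N an integer. Let x ∈ {0,1}^N be a binary vector and let y ∈ ℝ^N satisfy 0 ≤ y_k ≤ 1 for all k. If |(F_M x)_n| = |(F_M y)_n| for all n = 0,…,M−1, then y_k ∈ {0,1} for all k and ‖y‖₀ = ‖x‖₀. -/
open scoped BigOperators
open Finset

/-! The zero frequency gives `∑ y = ∑ x`, as both vectors are nonnegative. Since `M ≥ N`, no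
nonzero index difference `l - k` is a multiple of `M`, so the `M`-point transform satisfies
Parseval's identity and `∑ y² = ∑ x² = ∑ x`. Hence `∑ y (1 - y) = 0`, a sum of nonnegative terms
because `0 ≤ y ≤ 1`, which forces `y` to be binary; then `‖y‖₀ = ∑ y = ∑ x = ‖x‖₀`. -/

open Complex ComplexConjugate
open scoped Real

theorem sum_exp_int_mul_div_eq_zero {M : ℕ} {d : ℤ} (hd : ¬ (M : ℤ) ∣ d) :
    ∑ n : Fin M, exp (2 * π * I * d * n / M) = 0 := by
  obtain rfl | hM := eq_or_ne M 0
  · simp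
  set ζ := exp (2 * π * I / M)
  have hζ : IsPrimitiveRoot ζ M := isPrimitiveRoot_exp M hM
  have hζd_ne_one : ζ ^ d ≠ 1 := (hζ.zpow_eq_one_iff_dvd d).not.mpr hd
  have hζd_pow : (ζ ^ d) ^ M = 1 := by
    rw [← zpow_natCast, ← zpow_mul, mul_comm, zpow_mul, zpow_natCast, hζ.pow_eq_one, one_zpow]
  calc ∑ n : Fin M, exp (2 * π * I * d * n / M)
      = ∑ n ∈ range M, (ζ ^ d) ^ n := by
        rw [← Fin.sum_univ_eq_sum_range]
        refine sum_congr rfl fun n _ => ?_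
        rw [← exp_int_mul, ← Complex.exp_nat_mul]
        ring_nf
    _ = 0 := by rw [geom_sum_eq hζd_ne_one, hζd_pow, sub_self, zero_div]

theorem sum_exp_sub_mul_div_eq_ite {N M : ℕ} (hNM : N ≤ M) (k l : Fin N) :
    ∑ n : Fin M, exp (2 * π * I * (((l : ℕ) : ℤ) - (k : ℕ) : ℤ) * n / M) =
      if k = l then (M : ℂ) else 0 := by
  split_ifs with hkl
  · simp [hkl]
  · refine sum_exp_int_mul_div_eq_zero fun ⟨c, hc⟩ => hkl (Fin.ext ?_)
    have := Int.eq_zero_of_abs_lt_dvd ⟨c, hc⟩ (abs_sub_lt_iff.mpr ⟨by omega, by omega⟩)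
    omega

theorem norm_sq_odft_eq_sum_sum {N M : ℕ} (x : Fin N → ℂ) (n : Fin M) :
    (‖odft M x n‖ : ℂ) ^ 2 = ∑ k : Fin N, ∑ l : Fin N, x k * conj (x l) *
      exp (2 * π * I * (((l : ℕ) : ℤ) - (k : ℕ) : ℤ) * n / M) := by
  rw [← mul_conj', odft, map_sum, sum_mul_sum]
  refine sum_congr rfl fun k _ => sum_congr rfl fun l _ => ?_
  rw [map_mul, ← exp_conj, mul_mul_mul_comm, ← exp_add]
  simp only [map_div₀, map_mul, map_neg, map_ofNat, conj_I, conj_ofReal, map_natCast]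
  push_cast
  ring_nf

theorem sum_norm_sq_odft {N M : ℕ} (hNM : N ≤ M) (x : Fin N → ℂ) :
    ∑ n : Fin M, ‖odft M x n‖ ^ 2 = M * ∑ k, ‖x k‖ ^ 2 := by
  refine ofReal_injective ?_
  calc ((∑ n : Fin M, ‖odft M x n‖ ^ 2 : ℝ) : ℂ)
      = ∑ n : Fin M, ∑ k : Fin N, ∑ l : Fin N, x k * conj (x l) *
          exp (2 * π * I * (((l : ℕ) : ℤ) - (k : ℕ) : ℤ) * n / M) := by
        simp_rw [ofReal_sum, ofReal_pow, norm_sq_odft_eq_sum_sum]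
    _ = ∑ k : Fin N, ∑ l : Fin N, x k * conj (x l) *
          ∑ n : Fin M, exp (2 * π * I * (((l : ℕ) : ℤ) - (k : ℕ) : ℤ) * n / M) := by
        simp_rw [mul_sum]
        rw [sum_comm]
        exact sum_congr rfl fun k _ => sum_comm
    _ = ∑ k, x k * conj (x k) * M := by
        simp_rw [sum_exp_sub_mul_div_eq_ite hNM, mul_ite, mul_zero, sum_ite_eq, if_pos (mem_univ _)]
    _ = ((M * ∑ k, ‖x k‖ ^ 2 : ℝ) : ℂ) := by
        push_cast
        simp_rw [mul_conj', mul_sum, mul_comm]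

theorem odft_zero {N M : ℕ} (hM : 0 < M) (x : Fin N → ℂ) : odft M x ⟨0, hM⟩ = ∑ k, x k := by
  simp [odft]

theorem sum_norm_sq_eq_of_norm_odft_eq {N M : ℕ} (hNM : N ≤ M) (hM : 0 < M) {x y : Fin N → ℂ}
    (h : ∀ n, ‖odft M x n‖ = ‖odft M y n‖) : ∑ k, ‖x k‖ ^ 2 = ∑ k, ‖y k‖ ^ 2 := by
  have hparseval := sum_norm_sq_odft hNM x
  rw [sum_congr rfl fun n _ => by rw [h n], sum_norm_sq_odft hNM y] at hparseval
  exact (mul_left_cancel₀ (by positivity) hparseval).symm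

theorem eq_zero_or_eq_one_of_sum_sq_eq_sum {ι : Type*} [Fintype ι] {y : ι → ℝ}
    (hy : ∀ k, 0 ≤ y k ∧ y k ≤ 1) (h : ∑ k, y k ^ 2 = ∑ k, y k) (k : ι) : y k = 0 ∨ y k = 1 := by
  have hsum : ∑ k, y k * (1 - y k) = 0 := by
    simp_rw [mul_one_sub, sum_sub_distrib, ← sq, h, sub_self]
  have hk := (sum_eq_zero_iff_of_nonneg fun j _ => mul_nonneg (hy j).1 (sub_nonneg.2 (hy j).2)).1
    hsum k (mem_univ k)
  rcases mul_eq_zero.1 hk with hk0 | hk1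
  · exact Or.inl hk0
  · exact Or.inr (by linarith)

theorem card_filter_ne_zero_eq_sum {ι : Type*} [Fintype ι] {z : ι → ℝ}
    [DecidablePred fun k => z k ≠ 0] (hz : ∀ k, z k = 0 ∨ z k = 1) :
    ((univ.filter fun k => z k ≠ 0).card : ℝ) = ∑ k, z k := by
  rw [natCast_card_filter]
  refine sum_congr rfl fun k _ => ?_
  rcases hz k with h | h <;> simp [h]

open scoped Classical in
theorem box_to_binary_oversampling_general {N M : ℕ} (hM : N ≤ M)
    (x y : Fin N → ℝ) (hx : ∀ k, x k = 0 ∨ x k = 1)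
    (hy : ∀ k, 0 ≤ y k ∧ y k ≤ 1)
    (h : ∀ n : Fin M, ‖odft M (fun k => (x k : ℂ)) n‖ =
      ‖odft M (fun k => (y k : ℂ)) n‖) :
    (∀ k, y k = 0 ∨ y k = 1) ∧
    (Finset.univ.filter fun k => y k ≠ 0).card =
      (Finset.univ.filter fun k => x k ≠ 0).card := by
  obtain rfl | hN := N.eq_zero_or_pos
  · simp
  have hMpos : 0 < M := hN.trans_le hM
  have hx_nonneg : 0 ≤ ∑ k, x k := sum_nonneg fun k _ => by rcases hx k with hk | hk <;> simp [hk]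
  have hsum : ∑ k, y k = ∑ k, x k := by
    have hdc := h ⟨0, hMpos⟩
    rw [odft_zero, odft_zero, ← ofReal_sum, ← ofReal_sum, norm_real, norm_real,
      Real.norm_of_nonneg hx_nonneg, Real.norm_of_nonneg (sum_nonneg fun k _ => (hy k).1)] at hdc
    exact hdc.symm
  have hsq : ∑ k, y k ^ 2 = ∑ k, x k ^ 2 := by
    simpa [norm_real, sq_abs] using (sum_norm_sq_eq_of_norm_odft_eq hM hMpos h).symm
  have hx_sq : ∑ k, x k ^ 2 = ∑ k, x k :=
    sum_congr rfl fun k _ => by rcases hx k with hk | hk <;> simp [hk]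
  have hy_bin := eq_zero_or_eq_one_of_sum_sq_eq_sum hy (by rw [hsq, hx_sq, hsum])
  refine ⟨hy_bin, ?_⟩
  exact_mod_cast (card_filter_ne_zero_eq_sum hy_bin).trans
    (hsum.trans (card_filter_ne_zero_eq_sum hx).symm)

open scoped Classical in
/-- box relaxation for binary signals with `M ≥ N` oversampled
Fourier magnitudes. -/
theorem box_to_binary_oversampling {N M : ℕ} [NeZero N] (hM : N ≤ M)
    (x y : Fin N → ℝ) (hx : ∀ k, x k = 0 ∨ x k = 1)
    (hy : ∀ k, 0 ≤ y k ∧ y k ≤ 1)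
    (h : ∀ n : Fin M, ‖odft M (fun k => (x k : ℂ)) n‖ =
      ‖odft M (fun k => (y k : ℂ)) n‖) :
    (∀ k, y k = 0 ∨ y k = 1) ∧
    (Finset.univ.filter fun k => y k ≠ 0).card =
      (Finset.univ.filter fun k => x k ≠ 0).card :=
  box_to_binary_oversampling_general hM x y hx hy h
end

section
/- Let N, W, L be positive integers with W ≥ L, and let w ∈ ℂ^W be a constant window, i.e. w_k = a for all k = 0,…,W−1 for some fixed a ≠ 0, extended by w_k := 0 for k < 0 and k > W−1. Let R = ⌈(N+W−1)/L⌉. Let x ∈ {0,1}^N be a binary vector and y ∈ ℝ^N with 0 ≤ y_k ≤ 1 for all k. If the short-time Fourier transform magnitudes agree, i.e. |∑_{k=0}^{N−1} x_k w_{mL−k} e^{−2πikn/N}| = |∑_{k=0}^{N−1} y_k w_{mL−k} e^{−2πikn/N}| for all n = 0,…,N−1 and m = 0,…,R−1, then y_k ∈ {0,1} for all k. -/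
open scoped BigOperators
open Finset

/-!
Fix an index `k` and a section `m` whose window covers it; `W ≥ L` guarantees one exists. Up to the
factor `a`, the `m`-th sections of `x` and `y` are a binary vector and a vector in `[0, 1]^N` whose
DFTs have equal magnitudes. The zero frequency then gives `∑ x = ∑ y` and Parseval gives
`∑ x² = ∑ y²`; as `x² = x`, the nonnegative terms `y_j - y_j²` sum to zero, so `y_k ∈ {0, 1}`.
-/

open Complex ComplexConjugate

lemma geom_sum_eq_ite_of_pow_eq_one {K : Type*} [Field K] [DecidableEq K] {q : K} {N : ℕ}
    (hq : q ^ N = 1) : ∑ i ∈ range N, q ^ i = if q = 1 then (N : K) else 0 := by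
  split_ifs with h
  · simp [h]
  · rw [geom_sum_eq h, hq, sub_self, zero_div]

lemma exp_mul_conj_exp (N k j n : ℕ) :
    exp (-2 * Real.pi * I * k * n / N) * conj (exp (-2 * Real.pi * I * j * n / N)) =
      (exp (2 * Real.pi * I / N) ^ ((j : ℤ) - k)) ^ n := by
  rw [← exp_conj, ← exp_add, ← exp_int_mul, ← exp_nat_mul]
  congr 1
  simp only [map_div₀, map_mul, map_neg, map_ofNat, conj_ofReal, conj_I, conj_natCast]
  push_cast
  ring

lemma sum_exp_mul_conj_exp {N : ℕ} (hN : N ≠ 0) (k j : Fin N) :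
    ∑ n : Fin N, exp (-2 * Real.pi * I * ((k : ℕ) : ℂ) * ((n : ℕ) : ℂ) / N) *
      conj (exp (-2 * Real.pi * I * ((j : ℕ) : ℂ) * ((n : ℕ) : ℂ) / N)) =
      if k = j then (N : ℂ) else 0 := by
  have hζ := isPrimitiveRoot_exp N hN
  have hq : (exp (2 * Real.pi * I / N) ^ ((j : ℤ) - k)) ^ N = 1 := by
    rw [← zpow_natCast, ← zpow_mul, zpow_mul', zpow_natCast, hζ.pow_eq_one, one_zpow]
  simp only [exp_mul_conj_exp]
  rw [Fin.sum_univ_eq_sum_range (fun n => (exp (2 * Real.pi * I / N) ^ ((j : ℤ) - k)) ^ n),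
    geom_sum_eq_ite_of_pow_eq_one hq]
  refine if_congr ⟨fun h => Fin.ext ?_, fun h => by simp [h]⟩ rfl rfl
  have := Int.eq_zero_of_abs_lt_dvd ((hζ.zpow_eq_one_iff_dvd _).1 h) (by rw [abs_lt]; omega)
  omega

theorem sum_norm_dft_sq {N : ℕ} (hN : N ≠ 0) (z : Fin N → ℂ) :
    ∑ n, ‖dft z n‖ ^ 2 = N * ∑ k, ‖z k‖ ^ 2 := by
  apply ofReal_injective
  push_cast
  simp only [← mul_conj']
  calc ∑ n, dft z n * conj (dft z n)
      = ∑ k, ∑ j, z k * conj (z j) *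
          ∑ n : Fin N, exp (-2 * Real.pi * I * ((k : ℕ) : ℂ) * ((n : ℕ) : ℂ) / N) *
            conj (exp (-2 * Real.pi * I * ((j : ℕ) : ℂ) * ((n : ℕ) : ℂ) / N)) := by
        simp only [dft, map_sum, map_mul]
        simp_rw [sum_mul_sum, mul_sum]
        rw [sum_comm]
        refine sum_congr rfl fun k _ => ?_
        rw [sum_comm]
        exact sum_congr rfl fun j _ => sum_congr rfl fun n _ => by ring
    _ = N * ∑ k, z k * conj (z k) := by
        simp only [sum_exp_mul_conj_exp hN, mul_ite, mul_zero, sum_ite_eq, mem_univ, if_true]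
        rw [mul_sum]
        exact sum_congr rfl fun k _ => mul_comm _ _

lemma eq_zero_or_eq_one_of_sum_eq_of_sum_sq_eq {ι : Type*} [Fintype ι] {x y : ι → ℝ}
    (hx : ∀ k, x k = 0 ∨ x k = 1) (hy : ∀ k, 0 ≤ y k ∧ y k ≤ 1)
    (h₁ : ∑ k, x k = ∑ k, y k) (h₂ : ∑ k, x k ^ 2 = ∑ k, y k ^ 2) (k : ι) :
    y k = 0 ∨ y k = 1 := by
  have hsum : ∑ k, (y k - y k ^ 2) = 0 := by
    rw [sum_sub_distrib, ← h₁, ← h₂, ← sum_sub_distrib]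
    exact sum_eq_zero fun k _ => by rcases hx k with h | h <;> simp [h]
  have hk : y k - y k ^ 2 = 0 :=
    (sum_eq_zero_iff_of_nonneg fun i _ => by nlinarith [hy i]).1 hsum k (mem_univ k)
  have : y k * (1 - y k) = 0 := by linear_combination hk
  rcases mul_eq_zero.1 this with h | h
  · exact Or.inl h
  · exact Or.inr (by linarith)

lemma dft_zero {N : ℕ} [NeZero N] (z : Fin N → ℂ) : dft z 0 = ∑ k, z k := by
  simp [dft]

lemma eq_zero_or_eq_one_of_norm_dft_eq {N : ℕ} [NeZero N] {x y : Fin N → ℝ}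
    (hx : ∀ k, x k = 0 ∨ x k = 1) (hy : ∀ k, 0 ≤ y k ∧ y k ≤ 1)
    (h : ∀ n, ‖dft (fun k => (x k : ℂ)) n‖ = ‖dft (fun k => (y k : ℂ)) n‖) (k : Fin N) :
    y k = 0 ∨ y k = 1 := by
  have hsum : ∑ k, x k = ∑ k, y k := by
    have h₀ := h 0
    simp only [dft_zero, ← ofReal_sum, norm_real, Real.norm_eq_abs] at h₀
    rwa [abs_of_nonneg (sum_nonneg fun k _ => by rcases hx k with h | h <;> simp [h]),
      abs_of_nonneg (sum_nonneg fun k _ => (hy k).1)] at h₀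
  have hsum_sq : ∑ k, x k ^ 2 = ∑ k, y k ^ 2 := by
    have hP := sum_norm_dft_sq (NeZero.ne N) (fun k => (x k : ℂ))
    rw [sum_congr rfl fun n _ => by rw [h n], sum_norm_dft_sq (NeZero.ne N)] at hP
    simpa [norm_real, sq_abs, NeZero.ne N] using hP.symm
  exact eq_zero_or_eq_one_of_sum_eq_of_sum_sq_eq hx hy hsum hsum_sq k

lemma win_eq_mul_indicator (W : ℕ) (a : ℂ) (i : ℤ) :
    win W a i = a * ((Set.Ico (0 : ℤ) W).indicator 1 i : ℝ) := by
  by_cases hi : i ∈ Set.Ico (0 : ℤ) W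
  · rw [Set.indicator_of_mem hi]
    simp_all [win]
  · rw [Set.indicator_of_notMem hi]
    simp_all [win]

lemma exists_window_mem {N W L : ℕ} (hL : 0 < L) (hWL : L ≤ W) {k : ℕ} (hk : k < N) :
    ∃ m < (N + W - 1 + L - 1) / L, (m * L : ℤ) - k ∈ Set.Ico (0 : ℤ) W := by
  have hdiv := Nat.div_add_mod (k + L - 1) L
  have hmod := Nat.mod_lt (k + L - 1) hL
  set q := (k + L - 1) / L
  refine ⟨q, (Nat.le_div_iff_mul_le hL).2 ?_, ?_⟩
  · rw [Nat.succ_mul, mul_comm]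
    omega
  · rw [Set.mem_Ico]
    constructor <;> rw [mul_comm] <;> omega

theorem box_to_binary_stft_general {N W L : ℕ} [NeZero N] (hL : 0 < L)
    (hWL : L ≤ W) (a : ℂ) (ha : a ≠ 0) (x y : Fin N → ℝ)
    (hx : ∀ k, x k = 0 ∨ x k = 1) (hy : ∀ k, 0 ≤ y k ∧ y k ≤ 1)
    (h : ∀ m : ℕ, m < (N + W - 1 + L - 1) / L → ∀ n : Fin N,
      ‖(∑ k : Fin N, (x k : ℂ) * win W a ((m * L : ℤ) - ((k : ℕ) : ℤ)) *
        Complex.exp (-2 * Real.pi * Complex.I * ((k : ℕ) : ℂ) * ((n : ℕ) : ℂ) / (N : ℂ)))‖ =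
      ‖(∑ k : Fin N, (y k : ℂ) * win W a ((m * L : ℤ) - ((k : ℕ) : ℤ)) *
        Complex.exp (-2 * Real.pi * Complex.I * ((k : ℕ) : ℂ) * ((n : ℕ) : ℂ) / (N : ℂ)))‖) :
    ∀ k, y k = 0 ∨ y k = 1 := by
  intro k
  obtain ⟨m, hm, hkm⟩ := exists_window_mem hL hWL k.isLt
  set t : Fin N → ℝ := fun j => (Set.Ico (0 : ℤ) W).indicator 1 ((m * L : ℤ) - j)
  have ht : ∀ j, t j = 0 ∨ t j = 1 := fun j => by
    by_cases hj : (m * L : ℤ) - j ∈ Set.Ico (0 : ℤ) W <;> simp [t, hj]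
  have hnorm (v : Fin N → ℝ) (n : Fin N) :
      ‖dft (fun j => (v j : ℂ) * win W a ((m * L : ℤ) - j)) n‖ =
        ‖a‖ * ‖dft (fun j => ((v j * t j : ℝ) : ℂ)) n‖ := by
    simp only [dft, win_eq_mul_indicator, ← norm_mul, mul_sum]
    congr 2 with j
    push_cast
    ring
  have hwin := eq_zero_or_eq_one_of_norm_dft_eq (x := fun j => x j * t j)
    (y := fun j => y j * t j)
    (fun j => by rcases hx j with h | h <;> rcases ht j with h' | h' <;> simp [h, h'])
    (fun j => by rcases ht j with h' | h' <;> simp [h', hy j])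
    (fun n => mul_left_cancel₀ (norm_ne_zero_iff.2 ha) <| by
      rw [← hnorm, ← hnorm]; exact h m hm n) k
  simpa [t, Set.indicator_of_mem hkm] using hwin

/-- box relaxation for binary signals under STFT magnitudes with
a nonzero constant window of length `W ≥ L`. -/
theorem box_to_binary_stft {N W L : ℕ} [NeZero N] (hW : 0 < W) (hL : 0 < L)
    (hWL : L ≤ W) (a : ℂ) (ha : a ≠ 0) (x y : Fin N → ℝ)
    (hx : ∀ k, x k = 0 ∨ x k = 1) (hy : ∀ k, 0 ≤ y k ∧ y k ≤ 1)
    (h : ∀ m : ℕ, m < (N + W - 1 + L - 1) / L → ∀ n : Fin N,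
      ‖(∑ k : Fin N, (x k : ℂ) * win W a ((m * L : ℤ) - ((k : ℕ) : ℤ)) *
        Complex.exp (-2 * Real.pi * Complex.I * ((k : ℕ) : ℂ) * ((n : ℕ) : ℂ) / (N : ℂ)))‖ =
      ‖(∑ k : Fin N, (y k : ℂ) * win W a ((m * L : ℤ) - ((k : ℕ) : ℤ)) *
        Complex.exp (-2 * Real.pi * Complex.I * ((k : ℕ) : ℂ) * ((n : ℕ) : ℂ) / (N : ℂ)))‖) :
    ∀ k, y k = 0 ∨ y k = 1 :=
  box_to_binary_stft_general hL hWL a ha x y hx hy h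
end

section
/- Let N be a positive integer, ε > 0, and x ∈ ℂ^N with x ≠ 0. Let b ∈ ℝ^N be defined by b_n = |(F x)_n|, and let b̃ = b + η for some η ∈ ℂ^N. If ‖η‖_∞ < min{ ε/(4‖b‖_∞), ε/2, 1 }, then ‖F⁻¹(b̃ ⊙ b̃) − Aut_p(x)‖_∞ < ε, where b̃ ⊙ b̃ denotes the entrywise product. -/
open scoped BigOperators
open Finset

/-! By Wiener–Khinchin (orthogonality of the characters `n ↦ exp (2πi m n / N)`),
`F⁻¹ (|F x|²) = Aut_p x`. Since `b ⊙ b = |F x|²`, the error is `F⁻¹ (η ⊙ (2 b + η))`, and `F⁻¹`,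
an average of unimodular multiples, does not increase the sup norm; hence the error is at most
`‖η‖∞ (2 ‖b‖∞ + ‖η‖∞) < ε / 2 + ε / 2`. -/

open Complex
open scoped Real ComplexConjugate

lemma Fin.eq_add_iff_dvd {N : ℕ} (k l j : Fin N) :
    k = l + j ↔ (N : ℤ) ∣ ((j : ℕ) - (k : ℕ) + (l : ℕ) : ℤ) := by
  have : k = l + j ↔ (k : ℕ) ≡ l + j [MOD N] := by
    rw [Fin.ext_iff, Fin.val_add, Nat.ModEq, Nat.mod_eq_of_lt k.isLt]
  rw [this, Nat.modEq_iff_dvd]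
  push_cast
  ring_nf

lemma conj_dft {N : ℕ} (x : Fin N → ℂ) (n : Fin N) :
    conj (dft x n) = ∑ l : Fin N, conj (x l) * exp (2 * π * I * (l : ℕ) * (n : ℕ) / N) := by
  simp only [dft, map_sum, map_mul, ← exp_conj, map_div₀, map_neg, map_ofNat, conj_I,
    conj_ofReal, map_natCast]
  congr! 3
  ring

lemma idft_sub {N : ℕ} (u v : Fin N → ℂ) (j : Fin N) :
    idft (fun n => u n - v n) j = idft u j - idft v j := by
  simp only [idft, sub_mul, sum_sub_distrib, mul_sub]

variable {N : ℕ} [NeZero N]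

lemma sum_exp_two_pi_I_mul_div (m : ℤ) :
    ∑ n : Fin N, exp (2 * π * I * m * (n : ℕ) / N) = if (N : ℤ) ∣ m then (N : ℂ) else 0 := by
  have hζ := isPrimitiveRoot_exp N (NeZero.ne N)
  set μ := exp (2 * π * I / N) ^ m with hμ
  have hterm : ∀ n : ℕ, exp (2 * π * I * m * n / N) = μ ^ n := by
    intro n
    rw [hμ, ← exp_int_mul, ← exp_nat_mul]
    ring_nf
  simp only [hterm, Fin.sum_univ_eq_sum_range (μ ^ ·)]
  split_ifs with hdvd
  · simp [μ, (hζ.zpow_eq_one_iff_dvd m).2 hdvd]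
  · have hμN : μ ^ N = 1 := by
      rw [hμ, ← zpow_natCast, ← zpow_mul, hζ.zpow_eq_one_iff_dvd]
      exact dvd_mul_left _ _
    rw [geom_sum_eq (mt (hζ.zpow_eq_one_iff_dvd m).1 hdvd), hμN, sub_self, zero_div]

theorem idft_mul_conj_dft (x : Fin N → ℂ) (j : Fin N) :
    idft (fun n => dft x n * conj (dft x n)) j = autp x j := by
  have hN : (N : ℂ) ≠ 0 := Nat.cast_ne_zero.2 (NeZero.ne N)
  have expand : ∀ n : Fin N, dft x n * conj (dft x n) * exp (2 * π * I * (j : ℕ) * (n : ℕ) / N) =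
      ∑ k : Fin N, ∑ l : Fin N, x k * conj (x l) *
        exp (2 * π * I * ((j : ℕ) - (k : ℕ) + (l : ℕ) : ℤ) * (n : ℕ) / N) := by
    intro n
    rw [conj_dft, dft, sum_mul_sum, sum_mul]
    refine sum_congr rfl fun k _ => ?_
    rw [sum_mul]
    refine sum_congr rfl fun l _ => ?_
    rw [mul_mul_mul_comm, mul_assoc, ← exp_add, ← exp_add]
    push_cast
    ring_nf
  calc idft (fun n => dft x n * conj (dft x n)) j
      = (1 / N) * ∑ k : Fin N, ∑ l : Fin N, x k * conj (x l) *
          ∑ n : Fin N, exp (2 * π * I * ((j : ℕ) - (k : ℕ) + (l : ℕ) : ℤ) * (n : ℕ) / N) := by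
        simp only [idft, expand, mul_sum]
        rw [sum_comm]
        exact sum_congr rfl fun k _ => sum_comm
    _ = (1 / N) * ∑ l : Fin N, ∑ k : Fin N, if k = l + j then x k * conj (x l) * N else 0 := by
        simp only [sum_exp_two_pi_I_mul_div, ← Fin.eq_add_iff_dvd, mul_ite, mul_zero]
        rw [sum_comm]
    _ = autp x j := by
        simp only [sum_ite_eq', mem_univ, if_true, autp, mul_sum]
        exact sum_congr rfl fun l _ => by field_simp

lemma norm_idft_le {u : Fin N → ℂ} {C : ℝ} (hu : ∀ n, ‖u n‖ ≤ C) (j : Fin N) :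
    ‖idft u j‖ ≤ C := by
  have hN : (0 : ℝ) < N := Nat.cast_pos.2 (Nat.pos_of_ne_zero (NeZero.ne N))
  have hterm : ∀ n : Fin N, ‖u n * exp (2 * π * I * (j : ℕ) * (n : ℕ) / N)‖ ≤ C := fun n => by
    rw [norm_mul, show 2 * π * I * (j : ℕ) * (n : ℕ) / N = ((2 * π * (j : ℕ) * (n : ℕ) / N : ℝ) : ℂ) * I
      by push_cast; ring, norm_exp_ofReal_mul_I, mul_one]
    exact hu n
  calc ‖idft u j‖ ≤ (1 / N) * ∑ n : Fin N, C := by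
        rw [idft, norm_mul, norm_div, norm_one, norm_natCast]
        gcongr
        exact (norm_sum_le _ _).trans (sum_le_sum fun n _ => hterm n)
    _ = C := by rw [sum_const, card_univ, Fintype.card_fin, nsmul_eq_mul]; field_simp

lemma norm_le_linf (x : Fin N → ℂ) (k : Fin N) : ‖x k‖ ≤ linf x :=
  le_sup' (fun k => ‖x k‖) (mem_univ k)

lemma abs_le_linfR (x : Fin N → ℝ) (k : Fin N) : |x k| ≤ linfR x :=
  le_sup' (fun k => |x k|) (mem_univ k)

lemma linf_lt_iff {x : Fin N → ℂ} {c : ℝ} : linf x < c ↔ ∀ k, ‖x k‖ < c := by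
  simp [linf, sup'_lt_iff]

lemma norm_add_mul_self_sub_mul_self_le {a h : ℂ} {B t : ℝ} (ha : ‖a‖ ≤ B) (hh : ‖h‖ ≤ t) :
    ‖(a + h) * (a + h) - a * a‖ ≤ t * (2 * B + t) := by
  rw [show (a + h) * (a + h) - a * a = h * (2 * a + h) by ring, norm_mul]
  have h2a : ‖2 * a‖ ≤ 2 * B := by simpa using mul_le_mul_of_nonneg_left ha zero_le_two
  exact mul_le_mul hh ((norm_add_le _ _).trans (add_le_add h2a hh)) (norm_nonneg _)
    ((norm_nonneg _).trans hh)

-- `ε / (4 * 0) = 0`, so the bound on `t` already forces `B ≠ 0`.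
lemma mul_two_mul_add_lt_of_lt_min {t B ε : ℝ} (ht : 0 ≤ t) (hB : 0 ≤ B)
    (h : t < min (min (ε / (4 * B)) (ε / 2)) 1) : t * (2 * B + t) < ε := by
  simp only [lt_min_iff] at h
  obtain ⟨⟨htB, htε⟩, ht1⟩ := h
  have hB : 0 < B := hB.lt_of_ne fun hB => by simp [← hB] at htB; linarith
  rw [lt_div_iff₀ (by positivity)] at htB
  nlinarith

theorem denoise_autp_general {N : ℕ} [NeZero N] (ε : ℝ) (x : Fin N → ℂ)
    (b : Fin N → ℝ) (hb : ∀ n, b n = ‖dft x n‖)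
    (η : Fin N → ℂ)
    (hη : linf η < min (min (ε / (4 * linfR b)) (ε / 2)) 1) :
    linf (fun j => idft (fun n => ((b n : ℂ) + η n) * ((b n : ℂ) + η n)) j
      - autp x j) < ε := by
  set t := linf η
  set B := linfR b
  have hb_sq : ∀ n, (b n : ℂ) * b n = dft x n * conj (dft x n) := fun n => by
    rw [hb, mul_conj, normSq_eq_norm_sq]; push_cast; ring
  have hterm : ∀ n, ‖((b n : ℂ) + η n) * ((b n : ℂ) + η n) - dft x n * conj (dft x n)‖
      ≤ t * (2 * B + t) := fun n => by
    rw [← hb_sq]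
    exact norm_add_mul_self_sub_mul_self_le (by simpa using abs_le_linfR b n) (norm_le_linf η n)
  refine linf_lt_iff.2 fun j => ?_
  calc ‖idft (fun n => ((b n : ℂ) + η n) * ((b n : ℂ) + η n)) j - autp x j‖
      = ‖idft (fun n => ((b n : ℂ) + η n) * ((b n : ℂ) + η n) - dft x n * conj (dft x n)) j‖ := by
        rw [← idft_mul_conj_dft, idft_sub]
    _ ≤ t * (2 * B + t) := norm_idft_le hterm j
    _ < ε := mul_two_mul_add_lt_of_lt_min ((norm_nonneg _).trans (norm_le_linf η 0))
      ((abs_nonneg _).trans (abs_le_linfR b 0)) hη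

/-- denoising error bound for the periodic autocorrelation. -/
theorem denoise_autp {N : ℕ} [NeZero N] (ε : ℝ) (hε : 0 < ε) (x : Fin N → ℂ)
    (hx : x ≠ 0) (b : Fin N → ℝ) (hb : ∀ n, b n = ‖dft x n‖)
    (η : Fin N → ℂ)
    (hη : linf η < min (min (ε / (4 * linfR b)) (ε / 2)) 1) :
    linf (fun j => idft (fun n => ((b n : ℂ) + η n) * ((b n : ℂ) + η n)) j
      - autp x j) < ε :=
  denoise_autp_general ε x b hb η hη
end
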